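/- Let M be a von Neumann algebra and φ, ψ ∈ M_* normal functionals with zs(φ)·zs(ψ) = 0 (mutually singular). Then for all α, β ∈ ℂ, ‖αφ + βψ‖ = |α|·‖φ‖ + |β|·‖ψ‖. -/

import Mathlib

/-- A projection commuting with everything. -/
def IsCentralProjection {M : Type*} [NonUnitalRing M] [Star M] (z : M) : Prop :=
  z * z = z ∧ star z = z ∧ ∀ x : M, z * x = x * z

/-- `z` is the central support of the functional `φ`. -/
def IsCentralSupport {M : Type*} [Ring M] [StarRing M] (φ : M → ℂ) (z : M) : Prop :=
  IsCentralProjection z ∧ (∀ x : M, φ (x * z) = φ x) ∧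
    ∀ z' : M, IsCentralProjection z' → (∀ x : M, φ (x * z') = φ x) → z * z' = z

/-!
Suppose `φ (x z) = φ x` and `ψ (y w) = ψ y` for all `x, y`, where `z w = 0`. For `x, y` in the
unit ball, `x z` and `y w` have orthogonal left and right supports, so `u = x z + y w` has norm
`max ‖x z‖ ‖y w‖ ≤ 1`. After rotating `x` and `y` by phases, `(φ + ψ) u = |φ x| + |ψ y|`, which
gives `‖φ‖ + ‖ψ‖ ≤ ‖φ + ψ‖`.
-/

theorem IsCentralProjection.isStarProjection {M : Type*} [NonUnitalRing M] [Star M] {z : M}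
    (hz : IsCentralProjection z) : IsStarProjection z :=
  ⟨hz.1, hz.2.1⟩

section NonUnitalCStarAlgebra

variable {A : Type*} [NonUnitalCStarAlgebra A]

theorem norm_add_eq_max_of_star_mul_eq_zero {a b : A} (h₁ : star a * b = 0)
    (h₂ : a * star b = 0) : ‖a + b‖ = max ‖a‖ ‖b‖ := by
  have h₁' : star b * a = 0 := by simpa using congr(star $h₁)
  have hsum : star (a + b) * (a + b) = star a * a + star b * b := by
    rw [star_add, add_mul, mul_add, mul_add, h₁, h₁', add_zero, zero_add]
  have hprod : star a * a * (star b * b) = 0 := by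
    rw [mul_assoc, ← mul_assoc a, h₂, zero_mul, mul_zero]
  have hsq : ‖a + b‖ * ‖a + b‖ = max ‖a‖ ‖b‖ * max ‖a‖ ‖b‖ := by
    rw [← CStarRing.norm_star_mul_self, hsum,
      (IsSelfAdjoint.star_mul_self a).norm_add_eq_max (.star_mul_self b) hprod,
      CStarRing.norm_star_mul_self, CStarRing.norm_star_mul_self]
    rcases le_total ‖a‖ ‖b‖ with h | h
    · rw [max_eq_right h, max_eq_right (mul_self_le_mul_self (norm_nonneg a) h)]
    · rw [max_eq_left h, max_eq_left (mul_self_le_mul_self (norm_nonneg b) h)]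
  exact (mul_self_inj (norm_nonneg _) (le_max_of_le_left (norm_nonneg a))).mp hsq

variable {z w : A}

theorem norm_mul_add_mul_le_max (hz : IsCentralProjection z) (hw : IsStarProjection w)
    (hzw : z * w = 0) (x y : A) : ‖x * z + y * w‖ ≤ max ‖x‖ ‖y‖ := by
  have hwz : w * z = 0 := by rw [← hz.2.2 w, hzw]
  have h₁ : star (x * z) * (y * w) = 0 := by
    rw [star_mul, hz.2.1, mul_assoc, hz.2.2, mul_assoc, mul_assoc, hwz, mul_zero, mul_zero]
  have h₂ : x * z * star (y * w) = 0 := by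
    rw [star_mul, hw.isSelfAdjoint.star_eq, mul_assoc, ← mul_assoc z, hzw, zero_mul, mul_zero]
  rw [norm_add_eq_max_of_star_mul_eq_zero h₁ h₂]
  exact max_le_max
    ((norm_mul_le x z).trans (mul_le_of_le_one_right (norm_nonneg x) hz.isStarProjection.norm_le))
    ((norm_mul_le y w).trans (mul_le_of_le_one_right (norm_nonneg y) hw.norm_le))

theorem ContinuousLinearMap.norm_add_eq_of_supports_mul_eq_zero (f g : A →L[ℂ] ℂ)
    (hz : IsCentralProjection z) (hw : IsStarProjection w) (hzw : z * w = 0)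
    (hf : ∀ x, f (x * z) = f x) (hg : ∀ y, g (y * w) = g y) : ‖f + g‖ = ‖f‖ + ‖g‖ := by
  have hwz : w * z = 0 := by rw [← hz.2.2 w, hzw]
  have hfw (y : A) : f (y * w) = 0 := by rw [← hf, mul_assoc, hwz, mul_zero, map_zero]
  have hgz (x : A) : g (x * z) = 0 := by rw [← hg, mul_assoc, hzw, mul_zero, map_zero]
  have key {x y : A} (hx : ‖x‖ ≤ 1) (hy : ‖y‖ ≤ 1) : ‖f x‖ + ‖g y‖ ≤ ‖f + g‖ := by
    obtain ⟨c, hc, hcx⟩ := Complex.exists_norm_eq_mul_self (f x)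
    obtain ⟨d, hd, hdy⟩ := Complex.exists_norm_eq_mul_self (g y)
    have hu : ‖(c • x) * z + (d • y) * w‖ ≤ 1 :=
      (norm_mul_add_mul_le_max hz hw hzw _ _).trans <| max_le
        (by rwa [norm_smul, hc, one_mul]) (by rwa [norm_smul, hd, one_mul])
    have happ : (f + g) ((c • x) * z + (d • y) * w) = ((‖f x‖ + ‖g y‖ : ℝ) : ℂ) := by
      simp only [add_apply, map_add, hf, hg, hfw, hgz, map_smul,
        smul_eq_mul, ← hcx, ← hdy, add_zero, zero_add, Complex.ofReal_add]
    calc ‖f x‖ + ‖g y‖ = ‖(f + g) ((c • x) * z + (d • y) * w)‖ := by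
          rw [happ, Complex.norm_real, Real.norm_of_nonneg (by positivity)]
      _ ≤ ‖f + g‖ := (f + g).le_of_opNorm_le_of_le le_rfl hu |>.trans_eq (mul_one _)
  refine le_antisymm (norm_add_le f g) (le_of_forall_pos_le_add fun ε hε => ?_)
  obtain ⟨x, hx, hfx⟩ := f.exists_lt_apply_of_lt_opNorm (r := ‖f‖ - ε / 2) (by linarith)
  obtain ⟨y, hy, hgy⟩ := g.exists_lt_apply_of_lt_opNorm (r := ‖g‖ - ε / 2) (by linarith)
  linarith [key hx.le hy.le]

end NonUnitalCStarAlgebra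

/-- If `φ` and `ψ` have mutually orthogonal central supports
(`zs(φ)·zs(ψ) = 0`), then `‖αφ + βψ‖ = |α|‖φ‖ + |β|‖ψ‖` for all scalars `α, β`. -/
theorem stmt5 {M : Type*} [NormedRing M] [StarRing M] [CStarRing M] [NormedAlgebra ℂ M]
    [StarModule ℂ M] [CompleteSpace M]
    (φ ψ : M →L[ℂ] ℂ) (zφ zψ : M)
    (hφ : IsCentralSupport (⇑φ) zφ) (hψ : IsCentralSupport (⇑ψ) zψ)
    (horth : zφ * zψ = 0) :
    ∀ α β : ℂ, ‖α • φ + β • ψ‖ = ‖α‖ * ‖φ‖ + ‖β‖ * ‖ψ‖ := by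
  let _ : CStarAlgebra M := {}
  intro α β
  rw [← norm_smul, ← norm_smul]
  exact (α • φ).norm_add_eq_of_supports_mul_eq_zero (β • ψ) hφ.1 hψ.1.isStarProjection horth
    (fun x => by simp only [smul_apply, hφ.2.1])
    (fun y => by simp only [smul_apply, hψ.2.1])
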